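/- arXiv:2503.23651 — 3 statements merged into one kernel-verified Lean document; each statement's English description precedes it below -/
import Mathlib

section
/- Let f : I_m × I_n → X be a simplicial map. For any r, s ≥ 0, any 0 ≤ i, k ≤ m and any 0 ≤ j, l ≤ n, the compositions f ∘ (α_i^r × α_j^s) and f ∘ (α_k^r × α_l^s), both maps I_{m+r} × I_{n+s} → X, are contiguity equivalent. -/
structure ASC (V : Type) where
  faces : Set (Finset V)
  down_closed : ∀ ⦃s t : Finset V⦄, s ∈ faces → t ⊆ s → t ∈ faces

variable {U V W : Type}

/-- A vertex map is a simplicial map if it sends every simplex to a simplex. -/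
def IsSimplicialMap [DecidableEq W] (K : ASC V) (L : ASC W) (f : V → W) : Prop :=
  ∀ s ∈ K.faces, s.image f ∈ L.faces

/-- Two maps are contiguous if `f(σ) ∪ g(σ)` is a simplex for every simplex `σ`. -/
def Contiguous [DecidableEq W] (K : ASC V) (L : ASC W) (f g : V → W) : Prop :=
  ∀ s ∈ K.faces, s.image f ∪ s.image g ∈ L.faces

/-- Contiguity equivalence: a finite chain of contiguities through simplicial maps. -/
def ContigEquiv [DecidableEq W] (K : ASC V) (L : ASC W) : (V → W) → (V → W) → Prop :=
  Relation.ReflTransGen (fun a b =>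
    IsSimplicialMap K L a ∧ IsSimplicialMap K L b ∧ Contiguous K L a b)

/-- The categorical product of simplicial complexes. -/
def ASC.prod [DecidableEq V] [DecidableEq W] (K : ASC V) (L : ASC W) : ASC (V × W) where
  faces := {s | s.image Prod.fst ∈ K.faces ∧ s.image Prod.snd ∈ L.faces}
  down_closed := fun _s _t hs hts =>
    ⟨K.down_closed hs.1 (Finset.image_subset_image hts),
     L.down_closed hs.2 (Finset.image_subset_image hts)⟩

/-- The simplicial interval `I_m` on vertices `0, …, m`. -/
def interval (m : ℕ) : ASC ℕ where
  faces := {s | (∀ x ∈ s, x ≤ m) ∧ ∀ x ∈ s, ∀ y ∈ s, x ≤ y + 1}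
  down_closed := fun _s _t hs hts =>
    ⟨fun x hx => hs.1 x (hts hx), fun x hx y hy => hs.2 x (hts hx) y (hts hy)⟩

/-- The vertex map of `α_i : I_{m+1} → I_m`. -/
def alpha (i : ℕ) : ℕ → ℕ := fun s => if s ≤ i then s else s - 1

/-- The categorical product `I_m × I_n`. -/
def prodInterval (m n : ℕ) : ASC (ℕ × ℕ) := (interval m).prod (interval n)

/-- A face sphere: a simplicial map `(I_m × I_n, ∂(I_m × I_n)) → (X, x₀)`. -/
def IsFaceSphere [DecidableEq V] (X : ASC V) (x₀ : V) (m n : ℕ) (f : ℕ × ℕ → V) : Prop :=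
  IsSimplicialMap (prodInterval m n) X f ∧
  ∀ p : ℕ × ℕ, p.1 ≤ m → p.2 ≤ n →
    (p.1 = 0 ∨ p.1 = m ∨ p.2 = 0 ∨ p.2 = n) → f p = x₀

/-- Contiguity equivalence of face spheres, relative the boundary. -/
def FaceContigEquiv [DecidableEq V] (X : ASC V) (x₀ : V) (m n : ℕ) :
    (ℕ × ℕ → V) → (ℕ × ℕ → V) → Prop :=
  Relation.ReflTransGen (fun a b =>
    IsFaceSphere X x₀ m n a ∧ IsFaceSphere X x₀ m n b ∧
      Contiguous (prodInterval m n) X a b)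

/-- The trivial extension `f ∘ (α_m^r × α_n^s)`. -/
def trivExt (m n r s : ℕ) (f : ℕ × ℕ → V) : ℕ × ℕ → V :=
  f ∘ Prod.map ((alpha m)^[r]) ((alpha n)^[s])

/-- Extension-contiguity equivalence of face spheres of possibly different sizes. -/
def ExtContigEquiv [DecidableEq V] (X : ASC V) (x₀ : V) (m n : ℕ) (f : ℕ × ℕ → V)
    (m' n' : ℕ) (g : ℕ × ℕ → V) : Prop :=
  ∃ M N, m ≤ M ∧ m' ≤ M ∧ n ≤ N ∧ n' ≤ N ∧
    FaceContigEquiv X x₀ M N (trivExt m n (M - m) (N - n) f)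
      (trivExt m' n' (M - m') (N - n') g)

/-- The product `f · g` of face spheres: `f` in the lower-left block,
a translate of `g` in the upper-right block, basepoint elsewhere. -/
def fsMul (x₀ : V) (m n : ℕ) (f g : ℕ × ℕ → V) : ℕ × ℕ → V := fun p =>
  if p.1 ≤ m ∧ p.2 ≤ n then f p
  else if m + 1 ≤ p.1 ∧ n + 1 ≤ p.2 then g (p.1 - (m + 1), p.2 - (n + 1))
  else x₀

/-!
The closed form `α_a^r x = min x (max a (x - r))` is monotone in `a` and in `x` and
1-Lipschitz in `x`, so `α_a^r` and `α_{a+1}^r` are contiguous maps `I_{m+r} → I_m`.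
Moving `i` to `k` one step at a time in the first factor, then `j` to `l` in the second,
gives a chain of contiguities between the products, and postcomposing with `f` keeps it one.
-/

section General

variable {T : Type}

theorem isSimplicialMap_iff_contiguous_self [DecidableEq V] {K : ASC U} {L : ASC V}
    {f : U → V} : IsSimplicialMap K L f ↔ Contiguous K L f f := by
  simp only [IsSimplicialMap, Contiguous, Finset.union_self]

theorem IsSimplicialMap.contiguous_self [DecidableEq V] {K : ASC U} {L : ASC V} {f : U → V}
    (hf : IsSimplicialMap K L f) : Contiguous K L f f :=
  isSimplicialMap_iff_contiguous_self.mp hf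

theorem Contiguous.symm [DecidableEq V] {K : ASC U} {L : ASC V} {g g' : U → V}
    (h : Contiguous K L g g') : Contiguous K L g' g :=
  fun s hs => Finset.union_comm (s.image g) _ ▸ h s hs

theorem Contiguous.comp_left [DecidableEq V] [DecidableEq W] {K : ASC U} {L : ASC V}
    {M : ASC W} {f : V → W} {g g' : U → V} (hf : IsSimplicialMap L M f)
    (h : Contiguous K L g g') : Contiguous K M (f ∘ g) (f ∘ g') := fun s hs => by
  simpa only [Finset.image_union, Finset.image_image] using hf _ (h s hs)

theorem IsSimplicialMap.comp [DecidableEq V] [DecidableEq W] {K : ASC U} {L : ASC V}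
    {M : ASC W} {f : V → W} {g : U → V} (hf : IsSimplicialMap L M f)
    (hg : IsSimplicialMap K L g) : IsSimplicialMap K M (f ∘ g) :=
  isSimplicialMap_iff_contiguous_self.mpr (hg.contiguous_self.comp_left hf)

theorem Contiguous.prodMap [DecidableEq U] [DecidableEq V] [DecidableEq W] [DecidableEq T]
    {K : ASC U} {K' : ASC V} {L : ASC W} {L' : ASC T} {g g' : U → V} {h h' : W → T}
    (hg : Contiguous K K' g g') (hh : Contiguous L L' h h') :
    Contiguous (K.prod L) (K'.prod L') (Prod.map g h) (Prod.map g' h') := by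
  rintro s ⟨hs₁, hs₂⟩
  constructor
  · simpa only [Finset.image_union, Finset.image_image, Prod.map_fst'] using hg _ hs₁
  · simpa only [Finset.image_union, Finset.image_image, Prod.map_snd'] using hh _ hs₂

theorem IsSimplicialMap.prodMap [DecidableEq U] [DecidableEq V] [DecidableEq W]
    [DecidableEq T] {K : ASC U} {K' : ASC V} {L : ASC W} {L' : ASC T} {g : U → V}
    {h : W → T} (hg : IsSimplicialMap K K' g) (hh : IsSimplicialMap L L' h) :
    IsSimplicialMap (K.prod L) (K'.prod L') (Prod.map g h) :=
  isSimplicialMap_iff_contiguous_self.mpr (hg.contiguous_self.prodMap hh.contiguous_self)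

theorem ContigEquiv.symm [DecidableEq V] {K : ASC U} {L : ASC V} {g g' : U → V}
    (h : ContigEquiv K L g g') : ContigEquiv K L g' g :=
  Relation.ReflTransGen.mono (fun _ _ ⟨ha, hb, hab⟩ => ⟨hb, ha, hab.symm⟩) _ _
    (Relation.ReflTransGen.swap _ _ h)

theorem ContigEquiv.comp_left [DecidableEq V] [DecidableEq W] {K : ASC U} {L : ASC V}
    {M : ASC W} {f : V → W} {g g' : U → V} (hf : IsSimplicialMap L M f)
    (h : ContigEquiv K L g g') : ContigEquiv K M (f ∘ g) (f ∘ g') :=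
  Relation.ReflTransGen.lift (f ∘ ·)
    (fun _ _ ⟨ha, hb, hab⟩ => ⟨hf.comp ha, hf.comp hb, hab.comp_left hf⟩) _ _ h

theorem ContigEquiv.prodMap_left [DecidableEq U] [DecidableEq V] [DecidableEq W]
    [DecidableEq T] {K : ASC U} {K' : ASC V} {L : ASC W} {L' : ASC T} {g g' : U → V}
    {h : W → T} (hg : ContigEquiv K K' g g') (hh : IsSimplicialMap L L' h) :
    ContigEquiv (K.prod L) (K'.prod L') (Prod.map g h) (Prod.map g' h) :=
  Relation.ReflTransGen.lift (Prod.map · h)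
    (fun _ _ ⟨ha, hb, hab⟩ => ⟨ha.prodMap hh, hb.prodMap hh, hab.prodMap hh.contiguous_self⟩)
    _ _ hg

theorem ContigEquiv.prodMap_right [DecidableEq U] [DecidableEq V] [DecidableEq W]
    [DecidableEq T] {K : ASC U} {K' : ASC V} {L : ASC W} {L' : ASC T} {g : U → V}
    {h h' : W → T} (hg : IsSimplicialMap K K' g) (hh : ContigEquiv L L' h h') :
    ContigEquiv (K.prod L) (K'.prod L') (Prod.map g h) (Prod.map g h') :=
  Relation.ReflTransGen.lift (Prod.map g ·)
    (fun _ _ ⟨ha, hb, hab⟩ => ⟨hg.prodMap ha, hg.prodMap hb, hg.contiguous_self.prodMap hab⟩)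
    _ _ hh

end General

theorem alpha_iterate_apply (a r x : ℕ) : (alpha a)^[r] x = min x (max a (x - r)) := by
  induction r generalizing x with
  | zero => simp only [Function.iterate_zero, id_eq, Nat.sub_zero]; omega
  | succ r ih =>
    rw [Function.iterate_succ_apply, ih, alpha]
    split_ifs <;> omega

theorem alpha_iterate_le_alpha_iterate_add_one {a b r x y : ℕ} (hab : a ≤ b + 1)
    (hxy : x ≤ y + 1) : (alpha a)^[r] x ≤ (alpha b)^[r] y + 1 := by
  rw [alpha_iterate_apply, alpha_iterate_apply]
  omega

theorem contiguous_alpha_iterate {m r a b : ℕ} (ha : a ≤ m) (hb : b ≤ m) (hab : a ≤ b + 1)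
    (hba : b ≤ a + 1) :
    Contiguous (interval (m + r)) (interval m) ((alpha a)^[r]) ((alpha b)^[r]) := by
  have hbound : ∀ {c x}, c ≤ m → x ≤ m + r → (alpha c)^[r] x ≤ m := fun hc hx => by
    rw [alpha_iterate_apply]
    omega
  rintro s ⟨hs_le, hs_adj⟩
  simp only [interval, Set.mem_ofPred_eq, Finset.mem_union, Finset.mem_image]
  constructor
  · rintro _ (⟨x, hx, rfl⟩ | ⟨x, hx, rfl⟩)
    exacts [hbound ha (hs_le x hx), hbound hb (hs_le x hx)]
  · rintro _ (⟨x, hx, rfl⟩ | ⟨x, hx, rfl⟩) _ (⟨y, hy, rfl⟩ | ⟨y, hy, rfl⟩) <;>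
      exact alpha_iterate_le_alpha_iterate_add_one (by omega) (hs_adj x hx y hy)

theorem isSimplicialMap_alpha_iterate {m r a : ℕ} (ha : a ≤ m) :
    IsSimplicialMap (interval (m + r)) (interval m) ((alpha a)^[r]) :=
  isSimplicialMap_iff_contiguous_self.mpr (contiguous_alpha_iterate ha ha (by omega) (by omega))

theorem contigEquiv_alpha_iterate {m r i k : ℕ} (hi : i ≤ m) (hk : k ≤ m) :
    ContigEquiv (interval (m + r)) (interval m) ((alpha i)^[r]) ((alpha k)^[r]) := by
  wlog hik : i ≤ k generalizing i k
  · exact (this hk hi (by omega)).symm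
  induction k, hik using Nat.le_induction with
  | base => exact .refl
  | succ k hik ih =>
    exact (ih (by omega)).tail ⟨isSimplicialMap_alpha_iterate (by omega),
      isSimplicialMap_alpha_iterate hk, contiguous_alpha_iterate (by omega) hk (by omega) le_rfl⟩

/-- repeating different columns/rows the same number of times gives
contiguity equivalent maps. -/
theorem doubling_contigEquiv {V : Type} [DecidableEq V]
    (X : ASC V) (m n r s i j k l : ℕ) (f : ℕ × ℕ → V)
    (hf : IsSimplicialMap (prodInterval m n) X f)
    (hi : i ≤ m) (hk : k ≤ m) (hj : j ≤ n) (hl : l ≤ n) :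
    ContigEquiv (prodInterval (m + r) (n + s)) X
      (f ∘ Prod.map ((alpha i)^[r]) ((alpha j)^[s]))
      (f ∘ Prod.map ((alpha k)^[r]) ((alpha l)^[s])) :=
  ContigEquiv.comp_left hf <|
    ((contigEquiv_alpha_iterate hi hk).prodMap_left (isSimplicialMap_alpha_iterate hj)).trans
      (ContigEquiv.prodMap_right (isSimplicialMap_alpha_iterate hk)
        (contigEquiv_alpha_iterate hj hl))
end

section
/- Every continuous map f : (I², ∂I²) → (|X|, x₀) admits, for some sufficiently large m, a simplicial approximation g : (I_{m,m}, ∂I_{m,m}) → (X, x₀); consequently f is homotopic relative the boundary to the realization |g|. -/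
variable {U V W : Type}

noncomputable section
open Set

/-- The triangulation `I_{m,n}` of the unit square: vertices `(i,j)` (standing for
`(i/m, j/n)`), each grid square cut by the lower-left-to-upper-right diagonal. -/
def gridComplex (m n : ℕ) : ASC (ℕ × ℕ) where
  faces := {s | ∃ i j, i + 1 ≤ m ∧ j + 1 ≤ n ∧
    (s ⊆ {(i, j), (i + 1, j), (i + 1, j + 1)} ∨ s ⊆ {(i, j), (i, j + 1), (i + 1, j + 1)})}
  down_closed := by
    rintro s t ⟨i, j, hi, hj, h⟩ hts
    exact ⟨i, j, hi, hj, h.imp hts.trans hts.trans⟩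

/-- Barycentric coordinates of a point of the unit square with respect to the
triangulation `I_{m,n}`. -/
noncomputable def bary (m n : ℕ) (y : ℝ × ℝ) : ℕ × ℕ → ℝ := fun p =>
  let u : ℝ := m * y.1
  let v : ℝ := n * y.2
  let i : ℕ := ⌊u⌋₊
  let j : ℕ := ⌊v⌋₊
  let a : ℝ := u - (i : ℝ)
  let b : ℝ := v - (j : ℝ)
  if b ≤ a then
    (if p = (i, j) then 1 - a else 0) + (if p = (i + 1, j) then a - b else 0) +
      (if p = (i + 1, j + 1) then b else 0)
  else
    (if p = (i, j) then 1 - b else 0) + (if p = (i, j + 1) then b - a else 0) +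
      (if p = (i + 1, j + 1) then a else 0)

/-- The geometric realization of a simplicial complex, as a subset of `V → ℝ`
(barycentric coordinates). -/
def realization (K : ASC V) : Set (V → ℝ) :=
  {w | (∀ v, 0 ≤ w v) ∧ ∃ s ∈ K.faces, (∀ v, v ∉ s → w v = 0) ∧ ∑ v ∈ s, w v = 1}

/-- The realization `|g|` of a vertex map `g` on the triangulation `I_{m,n}`,
as a map from the unit square to barycentric coordinates on the target. -/
noncomputable def gridRealize (g : ℕ × ℕ → V) (m n : ℕ) (y : ℝ × ℝ) : V → ℝ :=
  fun u => ∑ᶠ p ∈ {p : ℕ × ℕ | g p = u}, bary m n y p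

def unitSquare : Set (ℝ × ℝ) := Icc (0 : ℝ) 1 ×ˢ Icc (0 : ℝ) 1

def squareBdry : Set (ℝ × ℝ) :=
  {y ∈ unitSquare | y.1 = 0 ∨ y.1 = 1 ∨ y.2 = 0 ∨ y.2 = 1}

/-- The point of `|X|` corresponding to the vertex `x₀`. -/
def vertexPoint [DecidableEq V] (x₀ : V) : V → ℝ := fun v => if v = x₀ then 1 else 0

/-- A continuous map of pairs `(I², ∂I²) → (|X|, x₀)`. -/
def IsSphereMap [DecidableEq V] (X : ASC V) (x₀ : V) (f : ℝ × ℝ → V → ℝ) : Prop :=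
  ContinuousOn f unitSquare ∧ (∀ y ∈ unitSquare, f y ∈ realization X) ∧
    ∀ y ∈ squareBdry, f y = vertexPoint x₀

/-- `g` is a simplicial approximation to `f`: for every `y` in the square,
`|g|(y)` lies in the carrier of `f(y)` (supports are nested). -/
def IsSimpApprox (X : ASC V) (m n : ℕ) (g : ℕ × ℕ → V) (f : ℝ × ℝ → V → ℝ) : Prop :=
  ∀ y ∈ unitSquare, ∀ u : V, gridRealize g m n y u ≠ 0 → f y u ≠ 0

/-- A simplicial map of pairs `(I_{m,n}, ∂I_{m,n}) → (X, x₀)`. -/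
def IsGridSphere [DecidableEq V] (X : ASC V) (x₀ : V) (m n : ℕ) (g : ℕ × ℕ → V) : Prop :=
  IsSimplicialMap (gridComplex m n) X g ∧
  ∀ p : ℕ × ℕ, p.1 ≤ m → p.2 ≤ n →
    (p.1 = 0 ∨ p.1 = m ∨ p.2 = 0 ∨ p.2 = n) → g p = x₀

/-- Homotopy relative the boundary between two maps `(I², ∂I²) → (|X|, x₀)`. -/
def HtpyRelBdry (X : ASC V) (F G : ℝ × ℝ → V → ℝ) : Prop :=
  ∃ H : (ℝ × ℝ) × ℝ → V → ℝ,
    ContinuousOn H (unitSquare ×ˢ Icc (0 : ℝ) 1) ∧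
    (∀ p ∈ unitSquare ×ˢ Icc (0 : ℝ) 1, H p ∈ realization X) ∧
    (∀ y ∈ unitSquare, H (y, 0) = F y) ∧
    (∀ y ∈ unitSquare, H (y, 1) = G y) ∧
    (∀ y ∈ squareBdry, ∀ t ∈ Icc (0 : ℝ) 1, H (y, t) = F y)

/-- The vertex map of the subdivision map `ρ_k : I_{km,kn} → I_{m,n}`. -/
def rho (k : ℕ) : ℕ × ℕ → ℕ × ℕ := fun p => (p.1 / k, p.2 / k)

/-- Horizontal concatenation of maps `(I², ∂I²) → (|X|, x₀)`: the product in `π₂`. -/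
noncomputable def hcat (F G : ℝ × ℝ → V → ℝ) : ℝ × ℝ → V → ℝ := fun y =>
  if y.1 ≤ 1 / 2 then F (2 * y.1, y.2) else G (2 * y.1 - 1, y.2)

end
/-!
The sets `{y | f y v ≠ 0}` (preimages of open stars) cover the compact square. Take a Lebesgue
number `δ`, a mesh `1 / m < δ`, and let the grid vertex `p` go to a vertex `g p` whose preimage
star contains the `δ`-neighbourhood of `p / m`. Every simplex of `I_{m,m}` then lies in the
carrier of `f` at the centre of its cell, boundary vertices go to `x₀` since `f = x₀` there, and
`|g| y` lies in the carrier of `f y`. Hence the straight-line homotopy from `f` to `|g|` stays in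
`|X|` and is fixed on the boundary. Continuity of `|g|` comes from writing the barycentric
coordinates of `I_{m,m}` as translates of one continuous hat function.
-/

open Set Topology

namespace SimplicialApproximation

-- The barycentric coordinate of the origin in the triangulation of the plane by the unit grid
-- cut along the diagonals `u - v ∈ ℤ`; `bary m n y` consists of its translates (`bary_eq_hat`).
def hat (u v : ℝ) : ℝ := max 0 (1 - max (max |u| |v|) |u - v|)

lemma hat_nonneg (u v : ℝ) : 0 ≤ hat u v := le_max_left _ _

lemma continuous_hat {α : Type*} [TopologicalSpace α] {f g : α → ℝ} (hf : Continuous f)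
    (hg : Continuous g) : Continuous fun x => hat (f x) (g x) := by
  unfold hat; fun_prop

lemma hat_comm (u v : ℝ) : hat u v = hat v u := by
  rw [hat, hat, max_comm |u|, abs_sub_comm]

lemma abs_lt_one_of_hat_ne_zero {u v : ℝ} (h : hat u v ≠ 0) : |u| < 1 ∧ |v| < 1 := by
  have : max (max |u| |v|) |u - v| < 1 := by
    by_contra! h'
    exact h (max_eq_left (by linarith))
  exact ⟨by grind, by grind⟩

lemma hat_sub_intCast {a b : ℝ} (hb : 0 ≤ b) (hba : b ≤ a) (ha : a < 1) (k l : ℤ) :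
    hat (a - k) (b - l) =
      (if k = 0 ∧ l = 0 then 1 - a else 0) + (if k = 1 ∧ l = 0 then a - b else 0) +
        (if k = 1 ∧ l = 1 then b else 0) := by
  by_cases hkl : (k = 0 ∨ k = 1) ∧ (l = 0 ∨ l = 1)
  · obtain ⟨rfl | rfl, rfl | rfl⟩ := hkl <;> norm_num [hat] <;> grind
  · have : hat (a - k) (b - l) = 0 := by
      by_contra h
      obtain ⟨hk, hl⟩ := abs_lt_one_of_hat_ne_zero h
      rw [abs_lt] at hk hl
      have : -1 < k := by exact_mod_cast (show (-1 : ℝ) < k by linarith)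
      have : k < 2 := by exact_mod_cast (show (k : ℝ) < 2 by linarith)
      have : -1 < l := by exact_mod_cast (show (-1 : ℝ) < l by linarith)
      have : l < 2 := by exact_mod_cast (show (l : ℝ) < 2 by linarith)
      omega
    rw [this]
    split_ifs <;> first | ring1 | (exfalso; omega)

lemma bary_eq_hat (m n : ℕ) {y : ℝ × ℝ} (hy₁ : 0 ≤ y.1) (hy₂ : 0 ≤ y.2) (p : ℕ × ℕ) :
    bary m n y p = hat (m * y.1 - p.1) (n * y.2 - p.2) := by
  obtain ⟨p₁, p₂⟩ := p
  simp only [bary]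
  have ha := Nat.floor_le (show 0 ≤ (m : ℝ) * y.1 by positivity)
  have ha' := Nat.lt_floor_add_one ((m : ℝ) * y.1)
  have hb := Nat.floor_le (show 0 ≤ (n : ℝ) * y.2 by positivity)
  have hb' := Nat.lt_floor_add_one ((n : ℝ) * y.2)
  set i := ⌊(m : ℝ) * y.1⌋₊
  set j := ⌊(n : ℝ) * y.2⌋₊
  set k : ℤ := p₁ - i
  set l : ℤ := p₂ - j
  have hk : (m : ℝ) * y.1 - p₁ = (m * y.1 - i) - k := by simp [k]
  have hl : (n : ℝ) * y.2 - p₂ = (n * y.2 - j) - l := by simp [l]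
  have e₀₀ : (p₁, p₂) = (i, j) ↔ k = 0 ∧ l = 0 := by simp only [Prod.mk.injEq]; omega
  have e₁₀ : (p₁, p₂) = (i + 1, j) ↔ k = 1 ∧ l = 0 := by simp only [Prod.mk.injEq]; omega
  have e₀₁ : (p₁, p₂) = (i, j + 1) ↔ l = 1 ∧ k = 0 := by simp only [Prod.mk.injEq]; omega
  have e₁₁ : (p₁, p₂) = (i + 1, j + 1) ↔ l = 1 ∧ k = 1 := by simp only [Prod.mk.injEq]; omega
  rw [hk, hl]
  by_cases hba : (n : ℝ) * y.2 - j ≤ m * y.1 - i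
  · rw [if_pos hba, hat_sub_intCast (by linarith) hba (by linarith)]
    simp only [e₀₀, e₁₀, e₁₁, and_comm]
  · rw [if_neg hba, hat_comm, hat_sub_intCast (by linarith) (by linarith) (by linarith)]
    simp only [e₀₀, e₀₁, e₁₁, and_comm]

lemma bary_nonneg (m n : ℕ) {y : ℝ × ℝ} (hy₁ : 0 ≤ y.1) (hy₂ : 0 ≤ y.2) (p : ℕ × ℕ) :
    0 ≤ bary m n y p :=
  bary_eq_hat m n hy₁ hy₂ p ▸ hat_nonneg _ _

lemma abs_sub_lt_one_of_bary_ne_zero {m n : ℕ} {y : ℝ × ℝ} (hy₁ : 0 ≤ y.1) (hy₂ : 0 ≤ y.2)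
    {p : ℕ × ℕ} (h : bary m n y p ≠ 0) : |m * y.1 - p.1| < 1 ∧ |n * y.2 - p.2| < 1 := by
  rw [bary_eq_hat m n hy₁ hy₂] at h
  exact abs_lt_one_of_hat_ne_zero h

lemma le_of_bary_ne_zero {m n : ℕ} {y : ℝ × ℝ} (hy : y ∈ unitSquare) {p : ℕ × ℕ}
    (h : bary m n y p ≠ 0) : p.1 ≤ m ∧ p.2 ≤ n := by
  obtain ⟨h₁, h₂⟩ := abs_sub_lt_one_of_bary_ne_zero hy.1.1 hy.2.1 h
  have hm : (m : ℝ) * y.1 ≤ m := mul_le_of_le_one_right m.cast_nonneg hy.1.2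
  have hn : (n : ℝ) * y.2 ≤ n := mul_le_of_le_one_right n.cast_nonneg hy.2.2
  have hp₁ : (p.1 : ℝ) < m + 1 := by linarith [(abs_lt.1 h₁).1]
  have hp₂ : (p.2 : ℝ) < n + 1 := by linarith [(abs_lt.1 h₂).1]
  exact ⟨Nat.lt_succ_iff.1 (by exact_mod_cast hp₁), Nat.lt_succ_iff.1 (by exact_mod_cast hp₂)⟩

-- `+ 2`: a point on the right edge lies in the cell `⌊m * 1⌋₊ = m`, whose corners reach `m + 1`.
def gridBox (m n : ℕ) : Finset (ℕ × ℕ) := Finset.range (m + 2) ×ˢ Finset.range (n + 2)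

lemma mem_gridBox_of_bary_ne_zero {m n : ℕ} {y : ℝ × ℝ} (hy : y ∈ unitSquare) {p : ℕ × ℕ}
    (h : bary m n y p ≠ 0) : p ∈ gridBox m n := by
  obtain ⟨h₁, h₂⟩ := le_of_bary_ne_zero hy h
  simp only [gridBox, Finset.mem_product, Finset.mem_range]
  omega

lemma sum_bary (m n : ℕ) {y : ℝ × ℝ} (hy : y ∈ unitSquare) :
    ∑ p ∈ gridBox m n, bary m n y p = 1 := by
  have hi : ⌊(m : ℝ) * y.1⌋₊ ≤ m :=
    Nat.floor_le_of_le (mul_le_of_le_one_right m.cast_nonneg hy.1.2)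
  have hj : ⌊(n : ℝ) * y.2⌋₊ ≤ n :=
    Nat.floor_le_of_le (mul_le_of_le_one_right n.cast_nonneg hy.2.2)
  simp only [bary]
  split_ifs <;> simp [Finset.sum_add_distrib, Finset.sum_ite_eq', gridBox, Nat.lt_succ_iff, hi, hj,
    hi.trans m.le_succ, hj.trans n.le_succ]

section gridRealize

variable {g : ℕ × ℕ → V} {m n : ℕ} {y : ℝ × ℝ}

lemma gridRealize_eq_sum [DecidableEq V] (hy : y ∈ unitSquare) (u : V) :
    gridRealize g m n y u = ∑ p ∈ gridBox m n with g p = u, bary m n y p := by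
  refine finsum_mem_eq_sum_of_inter_support_eq _ ?_
  ext p
  simp only [Set.mem_inter_iff, Set.mem_ofPred_eq, Function.mem_support, Finset.coe_filter]
  exact ⟨fun ⟨hgp, hb⟩ => ⟨⟨mem_gridBox_of_bary_ne_zero hy hb, hgp⟩, hb⟩,
    fun ⟨⟨_, hgp⟩, hb⟩ => ⟨hgp, hb⟩⟩

lemma gridRealize_nonneg (hy : y ∈ unitSquare) (u : V) : 0 ≤ gridRealize g m n y u := by
  classical
  rw [gridRealize_eq_sum hy]
  exact Finset.sum_nonneg fun p _ => bary_nonneg m n hy.1.1 hy.2.1 p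

lemma exists_of_gridRealize_ne_zero (hy : y ∈ unitSquare) {u : V}
    (h : gridRealize g m n y u ≠ 0) : ∃ p, g p = u ∧ bary m n y p ≠ 0 := by
  classical
  rw [gridRealize_eq_sum hy] at h
  obtain ⟨p, hp, hb⟩ := Finset.exists_ne_zero_of_sum_ne_zero h
  exact ⟨p, (Finset.mem_filter.1 hp).2, hb⟩

lemma sum_gridRealize [DecidableEq V] (hy : y ∈ unitSquare) {s : Finset V}
    (hs : ∀ p, bary m n y p ≠ 0 → g p ∈ s) : ∑ u ∈ s, gridRealize g m n y u = 1 := by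
  simp only [gridRealize_eq_sum hy]
  rw [Finset.sum_fiberwise_eq_sum_filter, Finset.sum_filter_of_ne fun p _ hp => hs p hp,
    sum_bary m n hy]

lemma gridRealize_mem_realization {K : ASC V} (hy : y ∈ unitSquare) {s : Finset V}
    (hsK : s ∈ K.faces) (hs : ∀ p, bary m n y p ≠ 0 → g p ∈ s) :
    gridRealize g m n y ∈ realization K := by
  classical
  refine ⟨gridRealize_nonneg hy, s, hsK, fun u hu => ?_, sum_gridRealize hy hs⟩
  by_contra h
  obtain ⟨p, rfl, hp⟩ := exists_of_gridRealize_ne_zero hy h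
  exact hu (hs p hp)

lemma continuousOn_gridRealize :
    ContinuousOn (gridRealize g m n) unitSquare := by
  classical
  refine continuousOn_pi.2 fun u => ?_
  have hc : Continuous fun y : ℝ × ℝ =>
      ∑ p ∈ gridBox m n with g p = u, hat (m * y.1 - p.1) (n * y.2 - p.2) :=
    continuous_finsetSum _ fun p _ => continuous_hat (by fun_prop) (by fun_prop)
  refine hc.continuousOn.congr fun y hy => ?_
  rw [gridRealize_eq_sum hy]
  exact Finset.sum_congr rfl fun p _ => bary_eq_hat m n hy.1.1 hy.2.1 p

end gridRealize

section realization

variable {K : ASC V} {w w₁ w₂ : V → ℝ}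

lemma exists_ne_zero_of_mem_realization (hw : w ∈ realization K) : ∃ v, w v ≠ 0 := by
  obtain ⟨-, s, -, -, hsum⟩ := hw
  by_contra! h
  simp [h] at hsum

lemma mem_faces_of_mem_realization (hw : w ∈ realization K) {t : Finset V}
    (ht : ∀ v ∈ t, w v ≠ 0) : t ∈ K.faces := by
  obtain ⟨-, s, hs, hout, -⟩ := hw
  exact K.down_closed hs fun v hv => by_contra fun hvs => ht v hv (hout v hvs)

lemma smul_add_smul_mem_realization (h₁ : w₁ ∈ realization K) (h₂ : w₂ ∈ realization K)
    (h : Function.support w₂ ⊆ Function.support w₁) {a b : ℝ} (ha : 0 ≤ a) (hb : 0 ≤ b)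
    (hab : a + b = 1) : a • w₁ + b • w₂ ∈ realization K := by
  obtain ⟨hw₁, s, hs, hout₁, hsum₁⟩ := h₁
  obtain ⟨hw₂, s₂, -, hout₂, hsum₂⟩ := h₂
  have hout₂' : ∀ v ∉ s, w₂ v = 0 := fun v hv =>
    by_contra fun hne => hv (by_contra fun hvs => h hne (hout₁ v hvs))
  have hsum₂' : ∑ v ∈ s, w₂ v = 1 :=
    (Finset.sum_congr_of_eq_on_inter (fun v _ hv => hout₂ v hv) (fun v _ hv => hout₂' v hv)
      fun _ _ _ => rfl).trans hsum₂
  refine ⟨fun v => ?_, s, hs, fun v hv => ?_, ?_⟩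
  · simp only [Pi.add_apply, Pi.smul_apply, smul_eq_mul]
    exact add_nonneg (mul_nonneg ha (hw₁ v)) (mul_nonneg hb (hw₂ v))
  · simp [hout₁ v hv, hout₂' v hv]
  · simp only [Pi.add_apply, Pi.smul_apply, smul_eq_mul, Finset.sum_add_distrib,
      ← Finset.mul_sum, hsum₁, hsum₂']
    linarith

lemma eq_vertexPoint_of_support_subset [DecidableEq V] (hw : w ∈ realization K) {x₀ : V}
    (h : Function.support w ⊆ {x₀}) : w = vertexPoint x₀ := by
  obtain ⟨-, s, -, hout, hsum⟩ := hw
  have hzero : ∀ v, v ≠ x₀ → w v = 0 := fun v hv => by_contra fun hne => hv (h hne)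
  have hx₀ : w x₀ = 1 :=
    hsum ▸ (Finset.sum_eq_single x₀ (fun v _ hv => hzero v hv) (hout x₀)).symm
  funext v
  by_cases hv : v = x₀
  · simp [vertexPoint, hv, hx₀]
  · simp [vertexPoint, hv, hzero v hv]

end realization

lemma htpyRelBdry_of_support_subset {X : ASC V} {F G : ℝ × ℝ → V → ℝ}
    (hF : ContinuousOn F unitSquare) (hG : ContinuousOn G unitSquare)
    (hFX : ∀ y ∈ unitSquare, F y ∈ realization X) (hGX : ∀ y ∈ unitSquare, G y ∈ realization X)
    (hGF : ∀ y ∈ unitSquare, Function.support (G y) ⊆ Function.support (F y))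
    (hbdry : ∀ y ∈ squareBdry, G y = F y) : HtpyRelBdry X F G := by
  refine ⟨fun q => (1 - q.2) • F q.1 + q.2 • G q.1, ?_, ?_, fun y _ => by simp,
    fun y _ => by simp, fun y hy t _ => by simp [hbdry y hy, ← add_smul]⟩
  · have hfst : MapsTo Prod.fst (unitSquare ×ˢ Icc (0 : ℝ) 1) unitSquare := fun q hq => hq.1
    exact ((continuousOn_const.sub continuousOn_snd).smul (hF.comp continuousOn_fst hfst)).add
      (continuousOn_snd.smul (hG.comp continuousOn_fst hfst))
  · rintro ⟨y, t⟩ ⟨hy, ht₀, ht₁⟩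
    exact smul_add_smul_mem_realization (hFX y hy) (hGX y hy) (hGF y hy) (by linarith) ht₀
      (by ring)

lemma lebesgue_number_lemma_support {α ι : Type*} [PseudoMetricSpace α] {S : Set α}
    {f : α → ι → ℝ} (hS : IsCompact S) (hf : ContinuousOn f S)
    (hcov : ∀ y ∈ S, ∃ i, f y i ≠ 0) :
    ∃ δ > 0, ∀ z ∈ S, ∃ i, ∀ y ∈ S, dist y z < δ → f y i ≠ 0 := by
  choose i hi using hcov
  have hnhds : ∀ z (hz : z ∈ S), (fun y => f y (i z hz)) ⁻¹' {0}ᶜ ∈ 𝓝[S] z := fun z hz =>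
    ((continuous_apply (i z hz)).continuousAt.comp_continuousWithinAt
      (hf z hz)).preimage_mem_nhdsWithin (isOpen_compl_singleton.mem_nhds (hi z hz))
  obtain ⟨W, hW, hWS⟩ := lebesgue_number_lemma_nhdsWithin' hS hnhds
  obtain ⟨δ, hδ, hδW⟩ := Metric.mem_uniformity_dist.1 hW
  refine ⟨δ, hδ, fun z hz => ?_⟩
  obtain ⟨⟨x, hx⟩, hzx⟩ := hWS z hz
  exact ⟨i x hx, fun y hy hyz => hzx ⟨hδW (by rwa [dist_comm]), hy⟩⟩

noncomputable def gridPt (m : ℕ) (p : ℕ × ℕ) : ℝ × ℝ := ((p.1 : ℝ) / m, (p.2 : ℝ) / m)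

lemma gridPt_mem_unitSquare {m : ℕ} {p : ℕ × ℕ} (hp₁ : p.1 ≤ m) (hp₂ : p.2 ≤ m) :
    gridPt m p ∈ unitSquare :=
  ⟨⟨by unfold gridPt; positivity, div_le_one_of_le₀ (by exact_mod_cast hp₁) m.cast_nonneg⟩,
    ⟨by unfold gridPt; positivity, div_le_one_of_le₀ (by exact_mod_cast hp₂) m.cast_nonneg⟩⟩

lemma gridPt_mem_squareBdry {m : ℕ} (hm : 0 < m) {p : ℕ × ℕ} (hp₁ : p.1 ≤ m) (hp₂ : p.2 ≤ m)
    (hp : p.1 = 0 ∨ p.1 = m ∨ p.2 = 0 ∨ p.2 = m) : gridPt m p ∈ squareBdry := by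
  refine ⟨gridPt_mem_unitSquare hp₁ hp₂, ?_⟩
  have hm' : (m : ℝ) ≠ 0 := by positivity
  rcases hp with h | h | h | h <;> simp [gridPt, h, hm']

lemma dist_gridPt_lt {m : ℕ} (hm : 0 < m) {y : ℝ × ℝ} {p : ℕ × ℕ} (h₁ : |m * y.1 - p.1| < 1)
    (h₂ : |m * y.2 - p.2| < 1) : dist y (gridPt m p) < 1 / m := by
  have hm' : (0 : ℝ) < m := by exact_mod_cast hm
  have key : ∀ {a : ℝ} {k : ℕ}, |m * a - k| < 1 → dist a (k / m) < 1 / m := fun h => by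
    rwa [Real.dist_eq, lt_div_iff₀ hm', ← abs_of_pos hm', ← abs_mul, abs_of_pos hm', sub_mul,
      div_mul_cancel₀ _ hm'.ne', mul_comm]
  exact max_lt (key h₁) (key h₂)

/-- The box `|m y - p| < 1` contains the open star of `p` in `I_{m,m}`: this is the usual
star condition `st p ⊆ f⁻¹ (st (g p))`, slightly strengthened. -/
def IsBoxApprox (m : ℕ) (g : ℕ × ℕ → V) (f : ℝ × ℝ → V → ℝ) : Prop :=
  ∀ p : ℕ × ℕ, p.1 ≤ m → p.2 ≤ m → ∀ y ∈ unitSquare,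
    |m * y.1 - p.1| < 1 → |m * y.2 - p.2| < 1 → f y (g p) ≠ 0

lemma exists_isBoxApprox [Nonempty V] {X : ASC V} {f : ℝ × ℝ → V → ℝ}
    (hfc : ContinuousOn f unitSquare) (hfX : ∀ y ∈ unitSquare, f y ∈ realization X) :
    ∃ m, 0 < m ∧ ∃ g, IsBoxApprox m g f := by
  obtain ⟨δ, hδ, hv⟩ := lebesgue_number_lemma_support
    (isCompact_Icc.prod isCompact_Icc : IsCompact unitSquare) hfc
    fun y hy => exists_ne_zero_of_mem_realization (hfX y hy)
  choose! v hv using hv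
  obtain ⟨k, hk⟩ := exists_nat_one_div_lt hδ
  refine ⟨k + 1, k.succ_pos, v ∘ gridPt (k + 1), fun p hp₁ hp₂ y hy h₁ h₂ =>
    hv _ (gridPt_mem_unitSquare hp₁ hp₂) y hy ?_⟩
  calc dist y (gridPt (k + 1) p) < 1 / (k + 1 : ℕ) := dist_gridPt_lt k.succ_pos h₁ h₂
    _ < δ := by simpa using hk

namespace IsBoxApprox

variable {m : ℕ} {g : ℕ × ℕ → V} {f : ℝ × ℝ → V → ℝ} {X : ASC V}

lemma ne_zero_of_bary_ne_zero (hg : IsBoxApprox m g f) {y : ℝ × ℝ} (hy : y ∈ unitSquare)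
    {p : ℕ × ℕ} (hp : bary m m y p ≠ 0) : f y (g p) ≠ 0 := by
  obtain ⟨hp₁, hp₂⟩ := le_of_bary_ne_zero hy hp
  obtain ⟨h₁, h₂⟩ := abs_sub_lt_one_of_bary_ne_zero hy.1.1 hy.2.1 hp
  exact hg p hp₁ hp₂ y hy h₁ h₂

lemma isSimpApprox (hg : IsBoxApprox m g f) (X : ASC V) : IsSimpApprox X m m g f := by
  intro y hy u hu
  obtain ⟨p, rfl, hp⟩ := exists_of_gridRealize_ne_zero hy hu
  exact hg.ne_zero_of_bary_ne_zero hy hp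

lemma gridRealize_mem_realization (hg : IsBoxApprox m g f)
    (hfX : ∀ y ∈ unitSquare, f y ∈ realization X) {y : ℝ × ℝ} (hy : y ∈ unitSquare) :
    gridRealize g m m y ∈ realization X := by
  obtain ⟨-, s, hs, hout, -⟩ := hfX y hy
  exact SimplicialApproximation.gridRealize_mem_realization hy hs fun p hp =>
    by_contra fun hps => hg.ne_zero_of_bary_ne_zero hy hp (hout _ hps)

lemma isSimplicialMap [DecidableEq V] (hg : IsBoxApprox m g f)
    (hfX : ∀ y ∈ unitSquare, f y ∈ realization X) : IsSimplicialMap (gridComplex m m) X g := by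
  rintro σ ⟨i, j, hi, hj, hσ⟩
  have hm : (0 : ℝ) < m := by exact_mod_cast (show 0 < m by omega)
  have hcorner : ∀ p ∈ σ, (p.1 = i ∨ p.1 = i + 1) ∧ (p.2 = j ∨ p.2 = j + 1) := by
    intro p hp
    rcases hσ with hσ | hσ <;>
    · have := hσ hp
      simp only [Finset.mem_insert, Finset.mem_singleton, Prod.ext_iff] at this
      omega
  have hcentre : ∀ {k l : ℕ}, (l = k ∨ l = k + 1) → |(m : ℝ) * ((k + 1 / 2) / m) - l| < 1 := by
    rintro k l (rfl | rfl) <;> rw [mul_div_cancel₀ _ hm.ne'] <;> norm_num [abs_lt]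
  have hc : (((i : ℝ) + 1 / 2) / m, ((j : ℝ) + 1 / 2) / m) ∈ unitSquare := by
    have hi' : (i : ℝ) + 1 ≤ m := by exact_mod_cast hi
    have hj' : (j : ℝ) + 1 ≤ m := by exact_mod_cast hj
    exact ⟨⟨by positivity, (div_le_one hm).2 (by linarith)⟩,
      ⟨by positivity, (div_le_one hm).2 (by linarith)⟩⟩
  refine mem_faces_of_mem_realization (hfX _ hc) ?_
  simp only [Finset.mem_image]
  rintro _ ⟨p, hp, rfl⟩
  obtain ⟨h₁, h₂⟩ := hcorner p hp
  exact hg p (by omega) (by omega) _ hc (hcentre h₁) (hcentre h₂)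

lemma eq_basepoint [DecidableEq V] {x₀ : V} (hg : IsBoxApprox m g f) (hm : 0 < m)
    (hfb : ∀ y ∈ squareBdry, f y = vertexPoint x₀) (p : ℕ × ℕ) (hp₁ : p.1 ≤ m) (hp₂ : p.2 ≤ m)
    (hp : p.1 = 0 ∨ p.1 = m ∨ p.2 = 0 ∨ p.2 = m) : g p = x₀ := by
  have hpt := gridPt_mem_squareBdry hm hp₁ hp₂ hp
  have hm' : (m : ℝ) ≠ 0 := by positivity
  have hne := hg p hp₁ hp₂ _ hpt.1 (by simp [gridPt, mul_div_cancel₀ _ hm'])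
    (by simp [gridPt, mul_div_cancel₀ _ hm'])
  rw [hfb _ hpt] at hne
  simpa [vertexPoint] using hne

end IsBoxApprox

end SimplicialApproximation

open SimplicialApproximation in
/-- simplicial approximation: every continuous map
`(I², ∂I²) → (|X|, x₀)` admits a simplicial approximation
`g : (I_{m,m}, ∂I_{m,m}) → (X, x₀)` for some large `m`, and `f` is then
homotopic relative the boundary to `|g|`. -/
theorem simplicial_approximation {V : Type} [DecidableEq V] (X : ASC V) (x₀ : V)
    (f : ℝ × ℝ → V → ℝ) (hf : IsSphereMap X x₀ f) :
    ∃ m : ℕ, 0 < m ∧ ∃ g : ℕ × ℕ → V, IsGridSphere X x₀ m m g ∧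
      IsSimpApprox X m m g f ∧ HtpyRelBdry X f (gridRealize g m m) := by
  obtain ⟨hfc, hfX, hfb⟩ := hf
  have : Nonempty V := ⟨x₀⟩
  obtain ⟨m, hm, g, hg⟩ := exists_isBoxApprox hfc hfX
  have happrox : IsSimpApprox X m m g f := hg.isSimpApprox X
  have hgX := fun y (hy : y ∈ unitSquare) => hg.gridRealize_mem_realization hfX hy
  refine ⟨m, hm, g, ⟨hg.isSimplicialMap hfX, hg.eq_basepoint hm hfb⟩, happrox,
    htpyRelBdry_of_support_subset hfc continuousOn_gridRealize hfX hgX happrox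
      fun y hy => ?_⟩
  rw [hfb y hy]
  refine eq_vertexPoint_of_support_subset (hgX y hy.1) fun u hu => ?_
  simpa [hfb y hy, vertexPoint] using happrox y hy.1 u hu
end

section
/- The subdivision map ρ_k : I_{km,kn} → I_{m,n}, defined on vertices by sending ((ki+r)/(km), (kj+s)/(kn)) to (i/m, j/n) for 0 ≤ r, s < k, is a simplicial map and is a simplicial approximation of the identity map of I². -/
variable {U V W : Type}

/-!
A vertex `p` lies in the carrier of `y` in `I_{M,N}` exactly when the three numbers `0`,
`M y₁ - p₁`, `N y₂ - p₂` lie in an open interval of length one: this describes the open star of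
`p` in the triangulation by lower-left-to-upper-right diagonals. Writing a vertex of the fine grid
as `p = k ρ_k(p) + r` with `0 ≤ r < k` in each coordinate, the differences for `ρ_k(p)` are the
fine ones shifted by `r` and divided by `k`. The shifts `r₁`, `r₂`, `r₁ - r₂` are integers of
absolute value at most `k - 1`, so the shifted differences have absolute value below `k`.
-/

theorem abs_sub_natCast_lt_one_iff {u : ℝ} (hu : 0 ≤ u) (p : ℕ) :
    |u - p| < 1 ↔ p = ⌊u⌋₊ ∨ (p = ⌊u⌋₊ + 1 ∧ (⌊u⌋₊ : ℝ) < u) := by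
  have hfl := Nat.floor_le hu
  have hlt := Nat.lt_floor_add_one u
  rw [abs_sub_lt_iff]
  constructor
  · rintro ⟨hup, hpu⟩
    have hge : ⌊u⌋₊ ≤ p := Nat.lt_add_one_iff.1 ((Nat.floor_lt hu).2 (by push_cast; linarith))
    have hle : p < ⌊u⌋₊ + 2 := by exact_mod_cast (show (p : ℝ) < ⌊u⌋₊ + 2 by linarith)
    obtain rfl | rfl : p = ⌊u⌋₊ ∨ p = ⌊u⌋₊ + 1 := by omega
    · exact .inl rfl
    · push_cast at hpu
      exact .inr ⟨rfl, by linarith⟩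
  · rintro (rfl | ⟨rfl, h⟩) <;> push_cast <;> constructor <;> linarith

theorem bary_ne_zero_iff (M N : ℕ) {y : ℝ × ℝ} (hu : 0 ≤ (M : ℝ) * y.1)
    (hv : 0 ≤ (N : ℝ) * y.2) (p : ℕ × ℕ) :
    bary M N y p ≠ 0 ↔ |M * y.1 - p.1| < 1 ∧ |N * y.2 - p.2| < 1 ∧
      |(M * y.1 - p.1) - (N * y.2 - p.2)| < 1 := by
  obtain ⟨p₁, p₂⟩ := p
  rw [abs_sub_natCast_lt_one_iff hu, abs_sub_natCast_lt_one_iff hv]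
  have hfl₁ := Nat.floor_le hu
  have hlt₁ := Nat.lt_floor_add_one ((M : ℝ) * y.1)
  have hfl₂ := Nat.floor_le hv
  have hlt₂ := Nat.lt_floor_add_one ((N : ℝ) * y.2)
  simp only [bary, Prod.mk.injEq]
  generalize (M : ℝ) * y.1 = u at *
  generalize (N : ℝ) * y.2 = v at *
  generalize ⌊u⌋₊ = i at *
  generalize ⌊v⌋₊ = j at *
  by_cases hp : (p₁ = i ∨ p₁ = i + 1) ∧ (p₂ = j ∨ p₂ = j + 1)
  · obtain ⟨rfl | rfl, rfl | rfl⟩ := hp <;> split_ifs <;> grind [abs_lt]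
  · refine iff_of_false (fun h => h ?_)
      fun ⟨h₁, h₂, _⟩ => hp ⟨h₁.imp_right And.left, h₂.imp_right And.left⟩
    split_ifs <;> grind

theorem abs_lt_one_of_abs_mul_lt {k x : ℝ} (hk : 0 < k) (h : |k * x| < k) : |x| < 1 := by
  rwa [abs_mul, abs_of_pos hk, mul_lt_iff_lt_one_right hk] at h

theorem natCast_mul_sub_natCast_div (u : ℝ) (k p : ℕ) :
    (k : ℝ) * (u - (p / k : ℕ)) = (k * u - p) + (p % k : ℕ) := by
  nth_rw 2 [← Nat.div_add_mod p k]
  push_cast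
  ring

theorem bary_rho_ne_zero {m n k : ℕ} (hk : 0 < k) {y : ℝ × ℝ} (hy₁ : 0 ≤ y.1) (hy₂ : 0 ≤ y.2)
    {p : ℕ × ℕ} (hp : bary (k * m) (k * n) y p ≠ 0) : bary m n y (rho k p) ≠ 0 := by
  have hu : 0 ≤ (m : ℝ) * y.1 := by positivity
  have hv : 0 ≤ (n : ℝ) * y.2 := by positivity
  rw [bary_ne_zero_iff _ _ (by positivity) (by positivity)] at hp
  rw [bary_ne_zero_iff _ _ hu hv]
  obtain ⟨p₁, p₂⟩ := p
  simp only [rho, Nat.cast_mul, mul_assoc] at hp ⊢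
  generalize (m : ℝ) * y.1 = u at *
  generalize (n : ℝ) * y.2 = v at *
  obtain ⟨h₁, h₂, h₁₂⟩ := hp
  rw [abs_lt] at h₁ h₂ h₁₂
  have hk' : (0 : ℝ) < k := by exact_mod_cast hk
  have hr₁ : ((p₁ % k : ℕ) : ℝ) + 1 ≤ k := by exact_mod_cast Nat.mod_lt p₁ hk
  have hr₂ : ((p₂ % k : ℕ) : ℝ) + 1 ≤ k := by exact_mod_cast Nat.mod_lt p₂ hk
  have hr₁' : (0 : ℝ) ≤ (p₁ % k : ℕ) := Nat.cast_nonneg _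
  have hr₂' : (0 : ℝ) ≤ (p₂ % k : ℕ) := Nat.cast_nonneg _
  refine ⟨abs_lt_one_of_abs_mul_lt hk' ?_, abs_lt_one_of_abs_mul_lt hk' ?_,
    abs_lt_one_of_abs_mul_lt hk' ?_⟩
  · rw [natCast_mul_sub_natCast_div, abs_lt]; constructor <;> linarith
  · rw [natCast_mul_sub_natCast_div, abs_lt]; constructor <;> linarith
  · rw [mul_sub, natCast_mul_sub_natCast_div, natCast_mul_sub_natCast_div, abs_lt]
    constructor <;> linarith

theorem exists_bary_ne_zero_of_gridRealize_ne_zero {g : ℕ × ℕ → V} {M N : ℕ} {y : ℝ × ℝ} {u : V}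
    (h : gridRealize g M N y u ≠ 0) : ∃ p, g p = u ∧ bary M N y p ≠ 0 :=
  exists_ne_zero_of_finsum_mem_ne_zero h

theorem succ_div_eq_or (i k : ℕ) : (i + 1) / k = i / k ∨ (i + 1) / k = i / k + 1 := by
  rw [Nat.succ_div]
  split_ifs <;> simp

theorem isSimplicialMap_rho (m n : ℕ) {k : ℕ} (hk : 0 < k) :
    IsSimplicialMap (gridComplex (k * m) (k * n)) (gridComplex m n) (rho k) := by
  rintro s ⟨i, j, hi, hj, hs⟩
  have hi' : i / k + 1 ≤ m := (Nat.div_lt_iff_lt_mul hk).2 (by rw [mul_comm]; omega)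
  have hj' : j / k + 1 ≤ n := (Nat.div_lt_iff_lt_mul hk).2 (by rw [mul_comm]; omega)
  refine ⟨i / k, j / k, hi', hj', ?_⟩
  simp only [Finset.subset_iff, Finset.mem_image, Finset.mem_insert, Finset.mem_singleton] at hs ⊢
  -- the two edges of a fine triangle move its `ρ_k`-image by `0` or `1` in one coordinate each,
  -- so the image is a monotone path in one coarse square, hence lies in one of its triangles
  rcases hs with hs | hs <;> rcases succ_div_eq_or i k with hi | hi <;>
    rcases succ_div_eq_or j k with hj | hj <;>
    first
    | (left; rintro q ⟨p, hp, rfl⟩; rcases hs hp with rfl | rfl | rfl <;> simp [rho, hi, hj]; done)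
    | (right; rintro q ⟨p, hp, rfl⟩; rcases hs hp with rfl | rfl | rfl <;> simp [rho, hi, hj])

theorem rho_simpApprox_id_general (m n k : ℕ) (hk : 2 ≤ k) :
    IsSimplicialMap (gridComplex (k * m) (k * n)) (gridComplex m n) (rho k) ∧
    ∀ y ∈ unitSquare, ∀ q : ℕ × ℕ,
      gridRealize (rho k) (k * m) (k * n) y q ≠ 0 → bary m n y q ≠ 0 := by
  have hk₀ : 0 < k := by omega
  refine ⟨isSimplicialMap_rho m n hk₀, fun y hy q hq => ?_⟩
  obtain ⟨p, rfl, hp⟩ := exists_bary_ne_zero_of_gridRealize_ne_zero hq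
  exact bary_rho_ne_zero hk₀ hy.1.1 hy.2.1 hp

/-- the subdivision map `ρ_k : I_{km,kn} → I_{m,n}` is a
simplicial map and a simplicial approximation of the identity of `I²`. -/
theorem rho_simpApprox_id (m n k : ℕ) (hm : 0 < m) (hn : 0 < n) (hk : 2 ≤ k) :
    IsSimplicialMap (gridComplex (k * m) (k * n)) (gridComplex m n) (rho k) ∧
    ∀ y ∈ unitSquare, ∀ q : ℕ × ℕ,
      gridRealize (rho k) (k * m) (k * n) y q ≠ 0 → bary m n y q ≠ 0 :=
  rho_simpApprox_id_general m n k hk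
end
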